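/- arXiv:1302.2751 — 2 statements merged into one kernel-verified Lean document; each statement's English description precedes it below -/
import Mathlib

section
/- Suppose A is a real n×n matrix with zero trace. Then there is a real orthogonal n×n matrix Q such that every diagonal entry of QAQ⁻¹ is zero. -/
/-!
The quadratic form `x ↦ ⟪x, T x⟫` of a traceless operator `T` sums to zero over any orthonormal
basis, so it takes a nonpositive and a nonnegative value on the unit sphere; the sphere is connected
in dimension at least two, hence the form vanishes at some unit vector `x`. Compressing `T` to
`(ℝ ∙ x)ᗮ` lowers the trace by `⟪x, T x⟫ = 0`, and induction on the dimension supplies the rest of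
an orthonormal basis on which the form vanishes. Its change-of-basis matrix is the required `Q`.
-/

open Module Submodule
open scoped InnerProductSpace

section RCLike

variable {𝕜 E : Type*} [RCLike 𝕜] [NormedAddCommGroup E] [InnerProductSpace 𝕜 E]

namespace LinearMap

noncomputable def compress (K : Submodule 𝕜 E) [K.HasOrthogonalProjection] (T : E →ₗ[𝕜] E) :
    K →ₗ[𝕜] K :=
  K.orthogonalProjectionOnto.toLinearMap ∘ₗ T ∘ₗ K.subtype

theorem inner_compress_apply (K : Submodule 𝕜 E) [K.HasOrthogonalProjection] (T : E →ₗ[𝕜] E)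
    (u v : K) : ⟪u, T.compress K v⟫_𝕜 = ⟪(u : E), T v⟫_𝕜 :=
  inner_orthogonalProjectionOnto_eq_of_mem_left u (T v)

end LinearMap

theorem OrthonormalBasis.exists_coe_eq_cons [FiniteDimensional 𝕜 E] {x : E} (hx : ‖x‖ = 1)
    {d : ℕ} (c : OrthonormalBasis (Fin d) 𝕜 (𝕜 ∙ x)ᗮ) :
    ∃ b : OrthonormalBasis (Fin (d + 1)) 𝕜 E, ⇑b = Fin.cons x fun i => (c i : E) := by
  have hv : Orthonormal 𝕜 (Fin.cons x fun i => (c i : E) : Fin (d + 1) → E) := by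
    rw [orthonormal_iff_ite]
    intro i j
    cases i using Fin.cases <;> cases j using Fin.cases
    · simp [hx]
    · simp [(Fin.succ_ne_zero _).symm, mem_orthogonal_singleton_iff_inner_right.mp (c _).2]
    · simp [Fin.succ_ne_zero, mem_orthogonal_singleton_iff_inner_left.mp (c _).2]
    · simp [← coe_inner, orthonormal_iff_ite.mp c.orthonormal]
  have hcard : Fintype.card (Fin (d + 1)) = finrank 𝕜 E := by
    rw [Fintype.card_fin, ← (𝕜 ∙ x).finrank_add_finrank_orthogonal,
      finrank_span_singleton (norm_ne_zero_iff.mp (hx ▸ one_ne_zero)),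
      finrank_eq_card_basis c.toBasis, Fintype.card_fin, add_comm]
  exact ⟨(basisOfOrthonormalOfCardEqFinrank hv hcard).toOrthonormalBasis (by simpa using hv),
    by simp⟩

theorem LinearMap.trace_eq_inner_add_trace_compress [FiniteDimensional 𝕜 E] {x : E} (hx : ‖x‖ = 1)
    (T : E →ₗ[𝕜] E) :
    trace 𝕜 E T = ⟪x, T x⟫_𝕜 + trace 𝕜 _ (T.compress (𝕜 ∙ x)ᗮ) := by
  let c := stdOrthonormalBasis 𝕜 (𝕜 ∙ x)ᗮ
  obtain ⟨b, hb⟩ := c.exists_coe_eq_cons hx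
  rw [trace_eq_sum_inner T b, trace_eq_sum_inner _ c, hb, Fin.sum_univ_succ]
  simp only [Fin.cons_zero, Fin.cons_succ, inner_compress_apply]

end RCLike

section Real

variable {F : Type*} [NormedAddCommGroup F] [InnerProductSpace ℝ F] [FiniteDimensional ℝ F]

theorem LinearMap.exists_norm_eq_one_inner_map_self_eq_zero [Nontrivial F] {T : F →ₗ[ℝ] F}
    (hT : trace ℝ F T = 0) : ∃ x : F, ‖x‖ = 1 ∧ ⟪x, T x⟫_ℝ = 0 := by
  let b := stdOrthonormalBasis ℝ F
  have hsum : ∑ i, ⟪b i, T (b i)⟫_ℝ = 0 := by rw [← trace_eq_sum_inner, hT]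
  have : Nonempty (Fin (finrank ℝ F)) := ⟨⟨0, finrank_pos⟩⟩
  obtain ⟨i, -, hi⟩ := Finset.exists_le_of_sum_le (f := fun i => ⟪b i, T (b i)⟫_ℝ) (g := 0)
    Finset.univ_nonempty (by simpa using hsum.le)
  obtain ⟨j, -, hj⟩ := Finset.exists_le_of_sum_le (f := 0) (g := fun i => ⟪b i, T (b i)⟫_ℝ)
    Finset.univ_nonempty (by simpa using hsum.ge)
  by_cases hij : i = j
  · subst hij
    exact ⟨b i, b.orthonormal.1 i, le_antisymm hi hj⟩
  have hrank : 1 < Module.rank ℝ F := by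
    rw [← finrank_eq_rank]
    exact_mod_cast
      (Fintype.one_lt_card_iff_nontrivial.mpr ⟨i, j, hij⟩).trans_eq (Fintype.card_fin _)
  obtain ⟨x, hx, hx0⟩ := (isConnected_sphere hrank 0 zero_le_one).isPreconnected.intermediate_value
    (f := fun x => ⟪x, T x⟫_ℝ) (by simp) (by simp)
    (continuous_id.inner T.continuous_of_finiteDimensional).continuousOn ⟨hi, hj⟩
  exact ⟨x, by simpa using hx, hx0⟩

theorem LinearMap.exists_orthonormalBasis_inner_map_self_eq_zero {d : ℕ} (hd : finrank ℝ F = d)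
    {T : F →ₗ[ℝ] F} (hT : trace ℝ F T = 0) :
    ∃ b : OrthonormalBasis (Fin d) ℝ F, ∀ i, ⟪b i, T (b i)⟫_ℝ = 0 := by
  induction d generalizing F with
  | zero => exact ⟨(stdOrthonormalBasis ℝ F).reindex (finCongr hd), fun i => i.elim0⟩
  | succ d ih =>
    have : Nontrivial F := Module.nontrivial_of_finrank_eq_succ hd
    obtain ⟨x, hx, hTx⟩ := exists_norm_eq_one_inner_map_self_eq_zero hT
    have hK : finrank ℝ (ℝ ∙ x)ᗮ = d := by
      have := (ℝ ∙ x).finrank_add_finrank_orthogonal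
      rw [finrank_span_singleton (norm_ne_zero_iff.mp (hx ▸ one_ne_zero))] at this
      omega
    have hT' : trace ℝ _ (T.compress (ℝ ∙ x)ᗮ) = 0 := by
      linarith [trace_eq_inner_add_trace_compress hx T]
    obtain ⟨c, hc⟩ := ih hK hT'
    obtain ⟨b, hb⟩ := c.exists_coe_eq_cons hx
    refine ⟨b, Fin.cases ?_ fun i => ?_⟩
    · simpa [hb] using hTx
    · rw [hb, Fin.cons_succ, ← inner_compress_apply, hc i]

end Real

open Matrix

/-- A real square matrix with zero trace is orthogonally conjugate to a
matrix with zero diagonal. -/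
theorem exists_orthogonal_conjugate_zero_diagonal
    {n : ℕ} (A : Matrix (Fin n) (Fin n) ℝ) (hA : A.trace = 0) :
    ∃ Q : Matrix (Fin n) (Fin n) ℝ, Q * Qᵀ = 1 ∧
      ∀ i : Fin n, (Q * A * Q⁻¹) i i = 0 := by
  let e := EuclideanSpace.basisFun (Fin n) ℝ
  have hAe : LinearMap.toMatrix e.toBasis e.toBasis (toEuclideanLin A) = A := by
    rw [toEuclideanLin_eq_toLin_orthonormal, LinearMap.toMatrix_toLin]
  have hT : LinearMap.trace ℝ _ (toEuclideanLin A) = 0 := by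
    rwa [LinearMap.trace_eq_matrix_trace ℝ e.toBasis, hAe]
  obtain ⟨b, hb⟩ :=
    LinearMap.exists_orthonormalBasis_inner_map_self_eq_zero finrank_euclideanSpace_fin hT
  refine ⟨b.toBasis.toMatrix e.toBasis,
    (mem_orthogonalGroup_iff _ _).mp (b.toMatrix_orthonormalBasis_mem_orthogonal e), fun i => ?_⟩
  -- `Q * A * Q⁻¹` is the matrix of `toEuclideanLin A` in the basis `b`.
  rw [inv_eq_right_inv (b.toBasis.toMatrix_mul_toMatrix_flip e.toBasis), ← hAe,
    basis_toMatrix_mul_linearMap_toMatrix_mul_basis_toMatrix, LinearMap.toMatrix_apply,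
    b.coe_toBasis_repr_apply, b.repr_apply_apply, b.coe_toBasis, hb]
end

section
/- Let 𝔤 be a 3-dimensional unimodular real Lie algebra equipped with an inner product ⟨·,·⟩. Then there exist an orthonormal basis {Y₁,Y₂,Y₃} of 𝔤 and real numbers λ₁,λ₂,λ₃ such that [Y₂,Y₃] = λ₁Y₁, [Y₃,Y₁] = λ₂Y₂ and [Y₁,Y₂] = λ₃Y₃; in particular Y₁, Y₂, Y₃ are geodesic vectors. -/
/-- An inner product on a real vector space, given as a positive-definite
symmetric bilinear form. -/
structure IsInnerProduct {L : Type*} [AddCommGroup L] [Module ℝ L]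
    (B : L →ₗ[ℝ] L →ₗ[ℝ] ℝ) : Prop where
  symm : ∀ x y : L, B x y = B y x
  posdef : ∀ x : L, x ≠ 0 → 0 < B x x

/-- `Y` is a geodesic vector: `Y ≠ 0` and `⟨[X,Y],Y⟩ = 0` for all `X`. -/
def IsGeodesicVector {L : Type*} [LieRing L] [LieAlgebra ℝ L]
    (B : L →ₗ[ℝ] L →ₗ[ℝ] ℝ) (Y : L) : Prop :=
  Y ≠ 0 ∧ ∀ X : L, B ⁅X, Y⁆ Y = 0

/-- A family of vectors is orthonormal with respect to the bilinear form `B`. -/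
def IsOrthonormalFamily {L : Type*} [AddCommGroup L] [Module ℝ L]
    (B : L →ₗ[ℝ] L →ₗ[ℝ] ℝ) {ι : Type*} [DecidableEq ι] (v : ι → L) : Prop :=
  ∀ i j, B (v i) (v j) = if i = j then 1 else 0

/-- A real Lie algebra is unimodular if every adjoint map is trace-free. -/
def IsUnimodularLie (L : Type*) [LieRing L] [LieAlgebra ℝ L] : Prop :=
  ∀ X : L, LinearMap.trace ℝ L (LieAlgebra.ad ℝ L X) = 0

/-!
Fix an orthonormal basis `e` and let `×` be the cross product in its coordinates. An alternating
bracket in dimension three factors as `[x, y] = M (x × y)`, where `M` sends `e₀, e₁, e₂` to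
`[e₁, e₂], [e₂, e₀], [e₀, e₁]`. Since `tr (ad eₖ) = ⟪eₖ₊₁, M eₖ₊₂⟫ - ⟪eₖ₊₂, M eₖ₊₁⟫`,
unimodularity says exactly that `M` is symmetric. Take an orthonormal eigenbasis `f` of `M`:
the cross products `f₁ × f₂`, `f₂ × f₀`, `f₀ × f₁` are `d • f₀`, `d • f₁`, `d • f₂` for one
scalar `d` (namely `±1`), hence `[f₁, f₂] = d μ₀ f₀` and cyclically.
-/

noncomputable abbrev IsInnerProduct.toCore {L : Type*} [AddCommGroup L] [Module ℝ L]
    {B : L →ₗ[ℝ] L →ₗ[ℝ] ℝ} (hB : IsInnerProduct B) : InnerProductSpace.Core ℝ L where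
  inner x y := B x y
  conj_inner_symm x y := hB.symm y x
  re_inner_nonneg x := by
    rcases eq_or_ne x 0 with rfl | hx
    · simp
    · exact (hB.posdef x hx).le
  add_left x y z := by simp
  smul_left x y r := by simp
  definite x hx := by
    by_contra h
    exact (hB.posdef x h).ne' hx

open scoped RealInnerProductSpace Matrix
open Module LinearMap

namespace Module.Basis

variable {R V W : Type*} [CommRing R] [AddCommGroup V] [Module R V] [AddCommGroup W] [Module R W]

noncomputable def cross (b : Basis (Fin 3) R V) : V →ₗ[R] V →ₗ[R] V :=
  (crossProduct.compl₁₂ b.equivFun.toLinearMap b.equivFun.toLinearMap).compr₂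
    b.equivFun.symm.toLinearMap

theorem equivFun_cross (b : Basis (Fin 3) R V) (x y : V) :
    b.equivFun (b.cross x y) = b.equivFun x ⨯₃ b.equivFun y := by
  simp only [cross, compr₂_apply, compl₁₂_apply, LinearEquiv.coe_coe, LinearEquiv.apply_symm_apply]

theorem isAlt_cross (b : Basis (Fin 3) R V) : b.cross.IsAlt := fun x =>
  b.equivFun.injective <| by rw [equivFun_cross, cross_self, map_zero]

theorem cross_one_two (b : Basis (Fin 3) R V) : b.cross (b 1) (b 2) = b 0 :=
  b.equivFun.injective <| by
    ext i; rw [equivFun_cross]; fin_cases i <;> simp [cross_apply, equivFun_self]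

theorem cross_two_zero (b : Basis (Fin 3) R V) : b.cross (b 2) (b 0) = b 1 :=
  b.equivFun.injective <| by
    ext i; rw [equivFun_cross]; fin_cases i <;> simp [cross_apply, equivFun_self]

theorem cross_zero_one (b : Basis (Fin 3) R V) : b.cross (b 0) (b 1) = b 2 :=
  b.equivFun.injective <| by
    ext i; rw [equivFun_cross]; fin_cases i <;> simp [cross_apply, equivFun_self]

noncomputable def liftCross (b : Basis (Fin 3) R V) (β : V →ₗ[R] V →ₗ[R] W) : V →ₗ[R] W :=
  b.constr R ![β (b 1) (b 2), β (b 2) (b 0), β (b 0) (b 1)]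

theorem liftCross_self_zero (b : Basis (Fin 3) R V) (β : V →ₗ[R] V →ₗ[R] W) :
    b.liftCross β (b 0) = β (b 1) (b 2) := by simp [liftCross]

theorem liftCross_self_one (b : Basis (Fin 3) R V) (β : V →ₗ[R] V →ₗ[R] W) :
    b.liftCross β (b 1) = β (b 2) (b 0) := by simp [liftCross]

theorem liftCross_self_two (b : Basis (Fin 3) R V) (β : V →ₗ[R] V →ₗ[R] W) :
    b.liftCross β (b 2) = β (b 0) (b 1) := by simp [liftCross]

theorem _root_.LinearMap.IsAlt.apply_eq_liftCross_cross {β : V →ₗ[R] V →ₗ[R] W} (hβ : β.IsAlt)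
    (b : Basis (Fin 3) R V) (x y : V) : β x y = b.liftCross β (b.cross x y) := by
  suffices h : β = b.cross.compr₂ (b.liftCross β) from LinearMap.congr_fun₂ h x y
  refine b.ext fun i => b.ext fun j => ?_
  fin_cases i <;> fin_cases j <;>
    simp only [Fin.zero_eta, Fin.mk_one, Fin.reduceFinMk, compr₂_apply, hβ.self_eq_zero,
      b.isAlt_cross.self_eq_zero, map_zero, ← hβ.neg (b 0) (b 1), ← hβ.neg (b 1) (b 2),
      ← hβ.neg (b 2) (b 0), ← b.isAlt_cross.neg (b 0) (b 1), ← b.isAlt_cross.neg (b 1) (b 2),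
      ← b.isAlt_cross.neg (b 2) (b 0), map_neg, cross_one_two, cross_two_zero, cross_zero_one,
      liftCross_self_zero, liftCross_self_one, liftCross_self_two]

end Module.Basis

section InnerProductSpace

variable {E : Type*} [NormedAddCommGroup E] [InnerProductSpace ℝ E]

theorem LinearMap.isSymmetric_of_basis {ι : Type*} (b : Basis ι ℝ E) {T : E →ₗ[ℝ] E}
    (h : ∀ i j, ⟪T (b i), b j⟫ = ⟪b i, T (b j)⟫) : T.IsSymmetric := by
  have : (innerₗ E).comp T = (innerₗ E).compl₂ T := b.ext fun i => b.ext fun j => h i j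
  exact fun x y => LinearMap.congr_fun₂ this x y

theorem OrthonormalBasis.inner_eq_dotProduct {ι : Type*} [Fintype ι] (e : OrthonormalBasis ι ℝ E)
    (x y : E) : ⟪x, y⟫ = e.toBasis.equivFun x ⬝ᵥ e.toBasis.equivFun y := by
  simp only [dotProduct, Basis.equivFun_apply, e.coe_toBasis_repr_apply, e.repr_apply_apply,
    ← e.sum_inner_mul_inner x y, real_inner_comm x]

namespace OrthonormalBasis

variable (e : OrthonormalBasis (Fin 3) ℝ E)

theorem inner_self_cross (x y : E) : ⟪x, e.toBasis.cross x y⟫ = 0 := by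
  rw [e.inner_eq_dotProduct, Basis.equivFun_cross, dot_self_cross]

theorem inner_cross_self (x y : E) : ⟪y, e.toBasis.cross x y⟫ = 0 := by
  rw [e.inner_eq_dotProduct, Basis.equivFun_cross, dot_cross_self]

theorem inner_cross_perm (x y z : E) : ⟪x, e.toBasis.cross y z⟫ = ⟪y, e.toBasis.cross z x⟫ := by
  simp only [e.inner_eq_dotProduct, Basis.equivFun_cross]
  exact triple_product_permutation _ _ _

theorem exists_cross_eq_smul (f : OrthonormalBasis (Fin 3) ℝ E) :
    ∃ d : ℝ, e.toBasis.cross (f 1) (f 2) = d • f 0 ∧ e.toBasis.cross (f 2) (f 0) = d • f 1 ∧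
      e.toBasis.cross (f 0) (f 1) = d • f 2 := by
  have expand (v : E) : v = ⟪f 0, v⟫ • f 0 + ⟪f 1, v⟫ • f 1 + ⟪f 2, v⟫ • f 2 := by
    simpa [Fin.sum_univ_three] using (f.sum_repr' v).symm
  refine ⟨⟪f 0, e.toBasis.cross (f 1) (f 2)⟫, ?_, ?_, ?_⟩
  · conv_lhs => rw [expand (e.toBasis.cross _ _)]
    simp [inner_self_cross, inner_cross_self]
  · conv_lhs => rw [expand (e.toBasis.cross _ _)]
    simp [inner_self_cross, inner_cross_self, ← inner_cross_perm]
  · conv_lhs => rw [expand (e.toBasis.cross _ _)]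
    simp [inner_self_cross, inner_cross_self, inner_cross_perm]

end OrthonormalBasis

theorem LinearMap.IsAlt.isSymmetric_liftCross {β : E →ₗ[ℝ] E →ₗ[ℝ] E} (hβ : β.IsAlt)
    (htr : ∀ x, trace ℝ E (β x) = 0) (e : OrthonormalBasis (Fin 3) ℝ E) :
    (e.toBasis.liftCross β).IsSymmetric := by
  have tr0 := htr (e 0)
  have tr1 := htr (e 1)
  have tr2 := htr (e 2)
  simp only [trace_eq_sum_inner _ e, Fin.sum_univ_three, hβ.self_eq_zero, inner_zero_right,
    ← hβ.neg (e 0) (e 1), ← hβ.neg (e 1) (e 2), ← hβ.neg (e 2) (e 0), inner_neg_right]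
    at tr0 tr1 tr2
  refine isSymmetric_of_basis e.toBasis fun i j => ?_
  fin_cases i <;> fin_cases j <;>
    simp only [Fin.zero_eta, Fin.mk_one, Fin.reduceFinMk, Basis.liftCross_self_zero,
      Basis.liftCross_self_one, Basis.liftCross_self_two] <;>
    simp only [OrthonormalBasis.coe_toBasis] <;>
    rw [real_inner_comm] <;> linarith

theorem LinearMap.IsAlt.exists_orthonormalBasis_apply_eq_smul (hdim : finrank ℝ E = 3)
    {β : E →ₗ[ℝ] E →ₗ[ℝ] E} (hβ : β.IsAlt) (htr : ∀ x, trace ℝ E (β x) = 0) :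
    ∃ (f : OrthonormalBasis (Fin 3) ℝ E) (l : Fin 3 → ℝ),
      β (f 1) (f 2) = l 0 • f 0 ∧ β (f 2) (f 0) = l 1 • f 1 ∧ β (f 0) (f 1) = l 2 • f 2 := by
  have : FiniteDimensional ℝ E := .of_finrank_eq_succ hdim
  let e : OrthonormalBasis (Fin 3) ℝ E := (stdOrthonormalBasis ℝ E).reindex (finCongr hdim)
  have hM := hβ.isSymmetric_liftCross htr e
  let f := hM.eigenvectorBasis hdim
  obtain ⟨d, h0, h1, h2⟩ := e.exists_cross_eq_smul f
  have hf (i : Fin 3) : e.toBasis.liftCross β (f i) = hM.eigenvalues hdim i • f i :=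
    hM.apply_eigenvectorBasis hdim i
  refine ⟨f, fun i => d * hM.eigenvalues hdim i, ?_, ?_, ?_⟩ <;>
    simp only [hβ.apply_eq_liftCross_cross e.toBasis, h0, h1, h2, map_smul, hf, smul_smul]

theorem OrthonormalBasis.inner_apply_self_eq_zero {β : E →ₗ[ℝ] E →ₗ[ℝ] E} (hβ : β.IsAlt)
    (f : OrthonormalBasis (Fin 3) ℝ E) {l : Fin 3 → ℝ} (h0 : β (f 1) (f 2) = l 0 • f 0)
    (h1 : β (f 2) (f 0) = l 1 • f 1) (h2 : β (f 0) (f 1) = l 2 • f 2) (x : E) (i : Fin 3) :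
    ⟪β x (f i), f i⟫ = 0 := by
  rw [← f.sum_repr' x]
  fin_cases i <;>
    simp [Fin.sum_univ_three, inner_add_left, real_inner_smul_left, hβ.self_eq_zero, ←
      hβ.neg (f 0) (f 1), ← hβ.neg (f 1) (f 2), ← hβ.neg (f 2) (f 0), h0, h1, h2, f.inner_eq_ite]

end InnerProductSpace

theorem dim_three_unimodular_milnor_basis_general
    {L : Type*} [LieRing L] [LieAlgebra ℝ L]
    (hdim : Module.finrank ℝ L = 3) (hU : IsUnimodularLie L)
    (B : L →ₗ[ℝ] L →ₗ[ℝ] ℝ) (hB : IsInnerProduct B) :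
    ∃ (b : Module.Basis (Fin 3) ℝ L) (l₁ l₂ l₃ : ℝ),
      IsOrthonormalFamily B b ∧
      ⁅b 1, b 2⁆ = l₁ • b 0 ∧
      ⁅b 2, b 0⁆ = l₂ • b 1 ∧
      ⁅b 0, b 1⁆ = l₃ • b 2 ∧
      ∀ i, IsGeodesicVector B (b i) := by
  let _ : NormedAddCommGroup L := hB.toCore.toNormedAddCommGroup
  let _ : InnerProductSpace ℝ L := .ofCore hB.toCore.toCore
  have hbracket : (LieAlgebra.ad ℝ L : L →ₗ[ℝ] L →ₗ[ℝ] L).IsAlt := lie_self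
  obtain ⟨f, l, h0, h1, h2⟩ := hbracket.exists_orthonormalBasis_apply_eq_smul hdim hU
  refine ⟨f.toBasis, l 0, l 1, l 2, fun i j => f.inner_eq_ite i j, h0,
    h1, h2, fun i => ⟨f.toBasis.ne_zero i, fun x => ?_⟩⟩
  exact f.inner_apply_self_eq_zero hbracket h0 h1 h2 x i

/-- Milnor's normal form for 3-dimensional unimodular real Lie algebras
with an inner product: there is an orthonormal basis `Y₁, Y₂, Y₃` with
`[Y₂,Y₃] = λ₁Y₁`, `[Y₃,Y₁] = λ₂Y₂`, `[Y₁,Y₂] = λ₃Y₃`; its members are geodesic. -/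
theorem dim_three_unimodular_milnor_basis
    {L : Type*} [LieRing L] [LieAlgebra ℝ L] [Module.Finite ℝ L]
    (hdim : Module.finrank ℝ L = 3) (hU : IsUnimodularLie L)
    (B : L →ₗ[ℝ] L →ₗ[ℝ] ℝ) (hB : IsInnerProduct B) :
    ∃ (b : Module.Basis (Fin 3) ℝ L) (l₁ l₂ l₃ : ℝ),
      IsOrthonormalFamily B b ∧
      ⁅b 1, b 2⁆ = l₁ • b 0 ∧
      ⁅b 2, b 0⁆ = l₂ • b 1 ∧
      ⁅b 0, b 1⁆ = l₃ • b 2 ∧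
      ∀ i, IsGeodesicVector B (b i) :=
  dim_three_unimodular_milnor_basis_general hdim hU B hB
end
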